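/- arXiv:1307.6843 — 2 statements merged into one kernel-verified Lean document; each statement's English description precedes it below -/
import Mathlib

section
/- Let t be a target distribution with finite or countably infinite support of cardinality n, and let M be a positive integer with M < n. Then there exists an M-type distribution p minimizing ‖p − t‖₁ over all M-type distributions such that, denoting by k the support size of p, the support of p is {1, …, k}, T_k ≤ k/M, and ‖p − t‖₁ ≤ (k/(2M)) · (1 + M T_k / k)² ≤ 2k/M. -/
/-!
Moving a nonzero count to an empty earlier slot never increases the distance to a nonincreasing
`t`, so every `M`-type distribution is beaten by one whose counts form a composition of `M` into
`k ≤ M` parts. There are finitely many of these, so an optimal `p` supported on the first `k`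
indices exists. Optimality forbids moving one unit of mass from any `i` to the empty slot `k`,
which carries `t k > 0` when `k < M`; hence `p i ≤ t i + 1/M`, and summing over `i < k` gives
`T_k ≤ k/M`. Finally `p` is at least as good as a rounding of `M t` on the first `k` indices:
take floors and round up the `F` entries of a set carrying at least its share `F/k` of the
fractional parts. Its error is at most `k/2 + (M T_k)²/(2k)`, which is the stated bound.
-/

/-- Variational distance `‖p − t‖₁ = Σ_i |p_i − t_i|`. -/
noncomputable def vd (p t : ℕ → ℝ) : ℝ := ∑' i, |p i - t i|

/-- A target distribution: a probability distribution on the positive integers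
(indexed here by ℕ) with nonincreasing entries. -/
def IsTargetDist (t : ℕ → ℝ) : Prop :=
  (∀ i, 0 ≤ t i) ∧ (∀ i, t (i + 1) ≤ t i) ∧ HasSum t 1

/-- An `M`-type distribution: every entry is `c_i / M` for a nonnegative integer
`c_i ≤ M`, and the entries sum to one. -/
def IsMType (M : ℕ) (p : ℕ → ℝ) : Prop :=
  HasSum p 1 ∧ ∃ c : ℕ → ℕ, (∀ i, c i ≤ M) ∧ ∀ i, p i = (c i : ℝ) / M

/-- Tail mass `T_k = Σ_{i > k} t_i` (the first `k` indices are `0, …, k−1`). -/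
noncomputable def tailMass (t : ℕ → ℝ) (k : ℕ) : ℝ := ∑' i, t (k + i)

open Finset Function

theorem Finset.exists_subset_card_eq_mul_sum_le {ι : Type*} [DecidableEq ι] (s : Finset ι)
    (f : ι → ℝ) {F : ℕ} (hF : F ≤ #s) :
    ∃ U ⊆ s, #U = F ∧ (F : ℝ) * ∑ i ∈ s, f i ≤ #s * ∑ i ∈ U, f i := by
  obtain ⟨U, hU, hmax⟩ := (s.powersetCard F).exists_max_image (fun U => ∑ i ∈ U, f i)
    (powersetCard_nonempty.2 hF)
  obtain ⟨hUs, hUF⟩ := mem_powersetCard.1 hU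
  have hexch : ∀ i ∈ U, ∀ j ∈ s \ U, f j ≤ f i := by
    intro i hi j hj
    obtain ⟨hjs, hjU⟩ := mem_sdiff.1 hj
    have hj' : j ∉ U.erase i := fun h => hjU (mem_of_mem_erase h)
    have hmem : insert j (U.erase i) ∈ s.powersetCard F := by
      refine mem_powersetCard.2 ⟨insert_subset hjs ((erase_subset i U).trans hUs), ?_⟩
      rw [card_insert_of_notMem hj', card_erase_of_mem hi, hUF]
      exact Nat.sub_add_cancel (hUF ▸ card_pos.2 ⟨i, hi⟩)
    have := hmax _ hmem
    rw [sum_insert hj', ← add_sum_erase U f hi] at this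
    linarith
  have hdouble : (F : ℝ) * ∑ j ∈ s \ U, f j ≤ #(s \ U) * ∑ i ∈ U, f i := by
    have := sum_le_sum fun i hi => sum_le_sum fun j hj => hexch i hi j hj
    simpa [sum_const, hUF, mul_sum] using this
  have hcard : (#(s \ U) : ℝ) + F = #s := by
    exact_mod_cast hUF ▸ card_sdiff_add_card_eq_card hUs
  refine ⟨U, hUs, hUF, ?_⟩
  rw [← sum_sdiff hUs, ← hcard]
  linarith

theorem exists_nat_round_of_mem_Ico {ι : Type*} [DecidableEq ι] (s : Finset ι) (hs : s.Nonempty)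
    (f : ι → ℝ) (hf : ∀ i ∈ s, f i ∈ Set.Ico 0 1) {F : ℕ} {u : ℝ}
    (hsum : ∑ i ∈ s, f i + u = F) :
    ∃ e : ι → ℕ, ∑ i ∈ s, e i = F ∧
      ∑ i ∈ s, |(e i : ℝ) - f i| ≤ #s / 2 + u ^ 2 / (2 * #s) := by
  have hk : (0 : ℝ) < #s := by exact_mod_cast hs.card_pos
  have hbound : ∀ x : ℝ, x * (2 * #s) ≤ #s ^ 2 + u ^ 2 → x ≤ #s / 2 + u ^ 2 / (2 * #s) :=
    fun x hx => by
      rw [div_add_div _ _ (by positivity) (by positivity), le_div_iff₀ (by positivity)]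
      nlinarith
  rcases le_or_gt #s F with hsF | hFs
  · obtain ⟨i₀, hi₀⟩ := hs
    set e : ι → ℕ := fun i => 1 + if i = i₀ then F - #s else 0
    have he : ∀ i ∈ s, |(e i : ℝ) - f i| = e i - f i := fun i hi => by
      have : (1 : ℝ) ≤ e i := by exact_mod_cast Nat.le_add_right _ _
      exact abs_of_nonneg (by linarith [(hf i hi).2])
    have hesum : ∑ i ∈ s, e i = F := by
      simp only [e, sum_add_distrib, sum_ite_eq', if_pos hi₀, sum_const, smul_eq_mul, mul_one]
      omega
    refine ⟨e, hesum, ?_⟩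
    have hesum' : ∑ i ∈ s, (e i : ℝ) = F := by exact_mod_cast hesum
    rw [sum_congr rfl he, sum_sub_distrib]
    refine hbound _ ?_
    nlinarith [sq_nonneg ((#s : ℝ) - u)]
  · obtain ⟨U, hUs, hUF, hUf⟩ := s.exists_subset_card_eq_mul_sum_le f hFs.le
    set e : ι → ℕ := fun i => if i ∈ U then 1 else 0
    have he : ∀ i ∈ s, |(e i : ℝ) - f i| = f i + if i ∈ U then 1 - 2 * f i else 0 :=
      fun i hi => by
        obtain ⟨hf0, hf1⟩ := hf i hi
        by_cases hiU : i ∈ U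
        · simp only [e, if_pos hiU, Nat.cast_one]
          rw [abs_of_nonneg (by linarith)]
          ring
        · simp only [e, if_neg hiU, Nat.cast_zero]
          rw [abs_of_nonpos (by linarith)]
          ring
    have hU : ∑ i ∈ U, (1 - 2 * f i) = F - 2 * ∑ i ∈ U, f i := by
      rw [sum_sub_distrib, ← mul_sum, sum_const, hUF, nsmul_eq_mul, mul_one]
    refine ⟨e, by simp [e, inter_eq_right.2 hUs, hUF], ?_⟩
    rw [sum_congr rfl he, sum_add_distrib, sum_ite_mem, inter_eq_right.2 hUs, hU]
    refine hbound _ ?_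
    nlinarith [sq_nonneg ((#s : ℝ) + u - 2 * F)]

theorem exists_nat_round {ι : Type*} [DecidableEq ι] (s : Finset ι) (hs : s.Nonempty)
    (y : ι → ℝ) (hy : ∀ i ∈ s, 0 ≤ y i) {M : ℕ} {u : ℝ}
    (hu : 0 ≤ u) (hsum : ∑ i ∈ s, y i + u = M) :
    ∃ c : ι → ℕ, (∀ i ∉ s, c i = 0) ∧ ∑ i ∈ s, c i = M ∧
      ∑ i ∈ s, |(c i : ℝ) - y i| ≤ #s / 2 + u ^ 2 / (2 * #s) := by
  set a : ι → ℕ := fun i => ⌊y i⌋₊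
  have hfract : ∀ i ∈ s, y i - a i ∈ Set.Ico 0 1 := fun i hi =>
    ⟨sub_nonneg.2 (Nat.floor_le (hy i hi)), by linarith [Nat.lt_floor_add_one (y i)]⟩
  obtain ⟨F, hF⟩ : ∃ F, ∑ i ∈ s, a i + F = M := by
    refine (Nat.exists_eq_add_of_le ?_).imp fun _ h => h.symm
    have : ((∑ i ∈ s, a i : ℕ) : ℝ) ≤ M := by
      push_cast
      linarith [sum_le_sum fun i hi => Nat.floor_le (hy i hi)]
    exact_mod_cast this
  have hF' : ∑ i ∈ s, (a i : ℝ) + F = M := by exact_mod_cast hF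
  obtain ⟨e, hesum, herr⟩ := exists_nat_round_of_mem_Ico s hs _ hfract (F := F) (u := u)
    (by rw [sum_sub_distrib]; linarith)
  refine ⟨fun i => if i ∈ s then a i + e i else 0, fun i hi => if_neg hi, ?_, ?_⟩
  · rw [sum_congr rfl fun i hi => if_pos hi, sum_add_distrib, hesum, hF]
  · refine le_of_eq_of_le (sum_congr rfl fun i hi => ?_) herr
    simp only [if_pos hi]
    push_cast
    congr 1
    ring

section VariationalDistance

variable {q t : ℕ → ℝ}

theorem vd_update (hq : Summable q) (ht : Summable t) (i : ℕ) (a : ℝ) :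
    vd (update q i a) t = vd q t + (|a - t i| - |q i - t i|) := by
  have hs := ((hq.sub ht).abs.hasSum).update i |a - t i|
  have hfun : (fun x => |update q i a x - t x|) = update (fun x => |q x - t x|) i |a - t i| := by
    ext x
    rcases eq_or_ne x i with rfl | hx <;> simp [*]
  rw [vd, hfun, hs.tsum_eq, vd]
  ring

theorem vd_comp_swap_le (hq : Summable q) (ht : Summable t) {i j : ℕ} (hqj : q j = 0)
    (hti : 0 ≤ t i) (htij : t i ≤ t j) : vd (q ∘ Equiv.swap i j) t ≤ vd q t := by
  rcases eq_or_ne i j with rfl | hij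
  · simp
  rw [Equiv.comp_swap_eq_update, vd_update (hq.update j (q i)) ht, vd_update hq ht,
    update_of_ne hij, hqj, zero_sub, zero_sub, abs_neg, abs_neg, abs_of_nonneg hti,
    abs_of_nonneg (hti.trans htij)]
  linarith [abs_sub_le (q i) (t i) (t j), abs_of_nonpos (sub_nonpos.2 htij)]

theorem sum_range_add_tailMass (ht : HasSum t 1) (k : ℕ) :
    ∑ i ∈ range k, t i + tailMass t k = 1 := by
  simp only [tailMass, add_comm k, ht.summable.sum_add_tsum_nat_add, ht.tsum_eq]

theorem tailMass_nonneg (ht0 : ∀ i, 0 ≤ t i) (k : ℕ) : 0 ≤ tailMass t k :=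
  tsum_nonneg fun _ => ht0 _

theorem vd_eq_sum_range_add_tailMass (ht0 : ∀ i, 0 ≤ t i) (ht : Summable t) {k : ℕ}
    (hq : ∀ i, k ≤ i → q i = 0) : vd q t = ∑ i ∈ range k, |q i - t i| + tailMass t k := by
  have htail : (fun i => |q (i + k) - t (i + k)|) = fun i => t (k + i) := by
    ext i
    rw [hq _ (Nat.le_add_left k i), zero_sub, abs_neg, abs_of_nonneg (ht0 _), add_comm]
  have hs : Summable fun i => |q i - t i| := by
    rw [← summable_nat_add_iff k, htail]
    simpa only [add_comm] using (summable_nat_add_iff k).2 ht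
  rw [vd, ← hs.sum_add_tsum_nat_add k, htail, tailMass]

end VariationalDistance

noncomputable def ofCounts (M : ℕ) (c : ℕ → ℕ) : ℕ → ℝ := fun i => c i / M

def IsWeakComposition (M N : ℕ) (c : ℕ → ℕ) : Prop :=
  (∀ i, N ≤ i → c i = 0) ∧ ∑ i ∈ range N, c i = M

def IsComposition (M k : ℕ) (c : ℕ → ℕ) : Prop :=
  IsWeakComposition M k c ∧ ∀ i < k, c i ≠ 0

section Counts

variable {M N k : ℕ} {c : ℕ → ℕ}

theorem hasSum_ofCounts (hc : ∀ i, N ≤ i → c i = 0) :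
    HasSum (ofCounts M c) ((∑ i ∈ range N, c i : ℕ) / M) := by
  rw [Nat.cast_sum, sum_div]
  exact hasSum_sum_of_ne_finset_zero fun i hi => by simp [ofCounts, hc i (by simpa using hi)]

theorem sum_range_eq_of_le (hkN : k ≤ N) (hc : ∀ i, k ≤ i → c i = 0) :
    ∑ i ∈ range k, c i = ∑ i ∈ range N, c i :=
  sum_subset (range_subset_range.2 hkN) fun i _ hi => hc i (by simpa using hi)

theorem setOf_swap_apply_ne_subset_range {i j : ℕ} (hi : i < N) (hj : j < N) :
    {x | Equiv.swap i j x ≠ x} ⊆ range N := fun x hx => by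
  obtain ⟨-, rfl | rfl⟩ := Equiv.swap_apply_ne_self_iff.1 hx <;> simpa

theorem sum_mul_comp_swap_lt {i j : ℕ} (hji : j < i) (hiN : i < N) (hj : c j = 0)
    (hi : c i ≠ 0) : ∑ x ∈ range N, x * (c ∘ Equiv.swap i j) x < ∑ x ∈ range N, x * c x := by
  have hperm :
      ∑ x ∈ range N, x * (c ∘ Equiv.swap i j) x = ∑ x ∈ range N, Equiv.swap i j x * c x := by
    rw [← Equiv.Perm.sum_comp _ _ _ (setOf_swap_apply_ne_subset_range hiN (hji.trans hiN))]
    simp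
  rw [hperm]
  refine sum_lt_sum (fun x _ => ?_) ⟨i, mem_range.2 hiN, ?_⟩
  · rcases eq_or_ne x i with rfl | hxi
    · simp [Nat.mul_le_mul_right _ hji.le]
    rcases eq_or_ne x j with rfl | hxj
    · simp [hj]
    · rw [Equiv.swap_apply_of_ne_of_ne hxi hxj]
  · rw [Equiv.swap_apply_left]
    exact Nat.mul_lt_mul_of_pos_right hji (Nat.pos_of_ne_zero hi)

namespace IsWeakComposition

theorem of_eq_zero (hc : IsWeakComposition M N c) (h0 : ∀ i, k ≤ i → c i = 0) :
    IsWeakComposition M k c := by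
  refine ⟨h0, ?_⟩
  rcases le_total k N with h | h
  · rw [sum_range_eq_of_le h h0, hc.2]
  · rw [← sum_range_eq_of_le h hc.1, hc.2]

theorem le (hc : IsWeakComposition M N c) (i : ℕ) : c i ≤ M := by
  by_cases hi : i < N
  · exact hc.2 ▸ single_le_sum (fun _ _ => Nat.zero_le _) (mem_range.2 hi)
  · simp [hc.1 i (not_lt.1 hi)]

theorem isMType (hM : 0 < M) (hc : IsWeakComposition M N c) : IsMType M (ofCounts M c) :=
  ⟨by simpa [hc.2, hM.ne'] using hasSum_ofCounts (M := M) hc.1, c, hc.le, fun _ => rfl⟩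

theorem comp_swap (hc : IsWeakComposition M N c) {i j : ℕ} (hi : i < N) (hj : j < N) :
    IsWeakComposition M N (c ∘ Equiv.swap i j) := by
  refine ⟨fun x hx => ?_, ?_⟩
  · rw [comp_apply, Equiv.swap_apply_of_ne_of_ne (by omega) (by omega), hc.1 x hx]
  · rw [← hc.2]
    exact Equiv.Perm.sum_comp _ _ _ (setOf_swap_apply_ne_subset_range hi hj)

theorem exists_isComposition (hc : IsWeakComposition M N c)
    (hgap : ∀ j i, j < i → c j = 0 → c i = 0) : ∃ k, IsComposition M k c := by
  classical
  have hex : ∃ j, c j = 0 := ⟨N, hc.1 N le_rfl⟩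
  refine ⟨Nat.find hex, hc.of_eq_zero fun i hi => ?_, fun i hi => Nat.find_min hex hi⟩
  rcases hi.eq_or_lt with rfl | hi
  · exact Nat.find_spec hex
  · exact hgap _ _ hi (Nat.find_spec hex)

end IsWeakComposition

theorem finite_setOf_isWeakComposition : {c | IsWeakComposition M N c}.Finite := by
  refine (Set.finite_range fun v : Fin N → Fin (M + 1) =>
    fun i => if h : i < N then (v ⟨i, h⟩ : ℕ) else 0).subset fun c hc => ?_
  refine ⟨fun i => ⟨c i, Nat.lt_succ_of_le (hc.le i)⟩, funext fun i => ?_⟩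
  dsimp only
  split_ifs with h
  · rfl
  · exact (hc.1 i (not_lt.1 h)).symm

theorem IsComposition.ofCounts_pos_iff (hM : 0 < M) (hc : IsComposition M k c) (i : ℕ) :
    0 < ofCounts M c i ↔ i < k := by
  rw [ofCounts, div_pos_iff_of_pos_right (by exact_mod_cast hM), Nat.cast_pos]
  refine ⟨fun h => ?_, fun h => Nat.pos_of_ne_zero (hc.2 i h)⟩
  by_contra hik
  simp [hc.1.1 i (not_lt.1 hik)] at h

theorem IsComposition.le (hc : IsComposition M k c) : k ≤ M := by
  simpa [hc.1.2] using card_nsmul_le_sum (range k) c 1 fun i hi =>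
    Nat.one_le_iff_ne_zero.2 (hc.2 i (mem_range.1 hi))

theorem IsComposition.pos (hM : 0 < M) (hc : IsComposition M k c) : 0 < k := by
  rcases Nat.eq_zero_or_pos k with rfl | hk
  · simp [← hc.1.2] at hM
  · exact hk

theorem IsMType.exists_isWeakComposition (hM : 0 < M) {q : ℕ → ℝ} (hq : IsMType M q) :
    ∃ N c, IsWeakComposition M N c ∧ q = ofCounts M c := by
  obtain ⟨hq1, c, -, hc⟩ := hq
  obtain rfl : q = ofCounts M c := funext hc
  have hMR : (0 : ℝ) < M := by exact_mod_cast hM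
  obtain ⟨N, hN⟩ := Filter.eventually_atTop.1 <|
    hq1.summable.tendsto_atTop_zero.eventually (gt_mem_nhds (one_div_pos.2 hMR))
  have h0 : ∀ i, N ≤ i → c i = 0 := fun i hi => by
    have := hN i hi
    rw [ofCounts, div_lt_div_iff_of_pos_right hMR] at this
    exact_mod_cast Nat.lt_one_iff.1 (by exact_mod_cast this)
  refine ⟨N, c, ⟨h0, ?_⟩, rfl⟩
  have := (hasSum_ofCounts (M := M) h0).unique hq1
  rw [div_eq_one_iff_eq hMR.ne'] at this
  exact_mod_cast this

end Counts

section Optimal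

variable {t : ℕ → ℝ} {M : ℕ}

theorem IsWeakComposition.exists_isComposition_vd_le (ht0 : ∀ i, 0 ≤ t i) (hanti : Antitone t)
    (ht : Summable t) {N : ℕ} {c : ℕ → ℕ} (hc : IsWeakComposition M N c) :
    ∃ k c', IsComposition M k c' ∧ vd (ofCounts M c') t ≤ vd (ofCounts M c) t := by
  induction hw : ∑ x ∈ range N, x * c x using Nat.strong_induction_on generalizing c with
  | _ w ih =>
    by_cases hgap : ∃ j i, j < i ∧ c j = 0 ∧ c i ≠ 0
    · obtain ⟨j, i, hji, hj, hi⟩ := hgap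
      have hiN : i < N := by_contra fun h => hi (hc.1 i (not_lt.1 h))
      obtain ⟨k, c', hc', hle⟩ := ih _ (hw ▸ sum_mul_comp_swap_lt hji hiN hj hi)
        (hc.comp_swap hiN (hji.trans hiN)) rfl
      refine ⟨k, c', hc', hle.trans ?_⟩
      exact vd_comp_swap_le (hasSum_ofCounts hc.1).summable ht (by simp [ofCounts, hj]) (ht0 i)
        (hanti hji.le)
    · push Not at hgap
      obtain ⟨k, hk⟩ := hc.exists_isComposition hgap
      exact ⟨k, c, hk, le_rfl⟩

theorem exists_isComposition_forall_vd_le (ht0 : ∀ i, 0 ≤ t i) (hanti : Antitone t)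
    (ht : Summable t) (hM : 0 < M) :
    ∃ k c, IsComposition M k c ∧ ∀ q, IsMType M q → vd (ofCounts M c) t ≤ vd q t := by
  have hne : {c | IsWeakComposition M M c}.Nonempty :=
    ⟨Pi.single 0 M, fun i hi => Pi.single_eq_of_ne (by omega) _, by simp [sum_pi_single', hM]⟩
  obtain ⟨c₀, hc₀, hmin⟩ := Set.exists_min_image _ (fun c => vd (ofCounts M c) t)
    finite_setOf_isWeakComposition hne
  obtain ⟨k, c, hc, hle⟩ := IsWeakComposition.exists_isComposition_vd_le ht0 hanti ht hc₀
  refine ⟨k, c, hc, fun q hq => ?_⟩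
  obtain ⟨N, c₁, hc₁, rfl⟩ := hq.exists_isWeakComposition hM
  obtain ⟨k₁, c₂, hc₂, hle₂⟩ := hc₁.exists_isComposition_vd_le ht0 hanti ht
  have hc₂M : IsWeakComposition M M c₂ :=
    hc₂.1.of_eq_zero fun i hi => hc₂.1.1 i (hc₂.le.trans hi)
  exact hle.trans ((hmin c₂ hc₂M).trans hle₂)

theorem IsMType.update_update (hM : 0 < M) {p : ℕ → ℝ} (hp : IsMType M p) {i k : ℕ}
    (hik : i ≠ k) (hi : 0 < p i) (hk : p k = 0) :
    IsMType M (update (update p i (p i - 1 / M)) k (1 / M)) := by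
  obtain ⟨hp1, c, hcM, hc⟩ := hp
  have hci : 1 ≤ c i := by
    rw [hc i] at hi
    exact_mod_cast (div_pos_iff_of_pos_right (by exact_mod_cast hM)).1 hi
  refine ⟨?_, update (update c i (c i - 1)) k 1, fun x => ?_, fun x => ?_⟩
  · have h := (hp1.update i (p i - 1 / M)).update k (1 / M)
    rwa [update_of_ne hik.symm, hk, show 1 / (M : ℝ) - 0 + (p i - 1 / M - p i + 1) = 1 by ring]
      at h
  · simp only [update_apply]
    split_ifs <;> grind
  · simp only [update_apply]
    split_ifs
    · simp
    · rw [Nat.cast_sub hci, hc i]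
      ring
    · exact hc x

theorem le_add_one_div_of_forall_vd_le (ht0 : ∀ i, 0 ≤ t i) (ht : Summable t) (hM : 0 < M)
    {p : ℕ → ℝ} (hp : IsMType M p) (hopt : ∀ q, IsMType M q → vd p t ≤ vd q t) {k : ℕ}
    (hk : p k = 0) (htk : 0 < t k) (i : ℕ) : p i ≤ t i + 1 / M := by
  have hM' : (0 : ℝ) < 1 / M := one_div_pos.2 (by exact_mod_cast hM)
  by_contra! hi
  have hik : i ≠ k := by rintro rfl; linarith [ht0 i]
  have hq := hp.update_update hM hik (by linarith [ht0 i]) hk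
  have hps : Summable p := hp.1.summable
  have := hopt _ hq
  rw [vd_update (hps.update i _) ht, vd_update hps ht, update_of_ne hik.symm, hk, zero_sub,
    abs_neg, abs_of_pos htk, abs_of_pos (by linarith : 0 < p i - t i),
    abs_of_pos (by linarith : 0 < p i - 1 / M - t i)] at this
  linarith [(abs_sub_lt_iff.2 ⟨by linarith, by linarith⟩ : |1 / (M : ℝ) - t k| < 1 / M + t k)]

theorem tailMass_le_of_forall_vd_le (ht0 : ∀ i, 0 ≤ t i) (hanti : Antitone t) (ht1 : HasSum t 1)
    (hM : 0 < M) (hn : 0 < t M) {k : ℕ} {c : ℕ → ℕ} (hc : IsComposition M k c)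
    (hopt : ∀ q, IsMType M q → vd (ofCounts M c) t ≤ vd q t) : tailMass t k ≤ k / M := by
  have hMR : (0 : ℝ) < M := by exact_mod_cast hM
  have hsum := sum_range_add_tailMass ht1 k
  rcases lt_or_ge k M with hkM | hMk
  · have hle := le_add_one_div_of_forall_vd_le ht0 ht1.summable hM (hc.1.isMType hM) hopt
      (by simp [ofCounts, hc.1.1 k le_rfl]) (hn.trans_le (hanti hkM.le))
    have h1 : ∑ i ∈ range k, ofCounts M c i = 1 := by
      simp only [ofCounts, ← sum_div, ← Nat.cast_sum, hc.1.2, div_self hMR.ne']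
    have := sum_le_sum fun i (_ : i ∈ range k) => hle i
    rw [h1, sum_add_distrib, sum_const, card_range, nsmul_eq_mul] at this
    rw [div_eq_mul_one_div]
    linarith
  · have : (1 : ℝ) ≤ k / M := (one_le_div hMR).2 (by exact_mod_cast hMk)
    linarith [sum_nonneg fun i (_ : i ∈ range k) => ht0 i]

theorem vd_le_of_forall_vd_le (ht0 : ∀ i, 0 ≤ t i) (ht1 : HasSum t 1) (hM : 0 < M)
    {p : ℕ → ℝ} (hopt : ∀ q, IsMType M q → vd p t ≤ vd q t) {k : ℕ} (hk : 0 < k) :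
    vd p t ≤ (k : ℝ) / (2 * M) * (1 + M * tailMass t k / k) ^ 2 := by
  have hMR : (0 : ℝ) < M := by exact_mod_cast hM
  have hkR : (0 : ℝ) < k := by exact_mod_cast hk
  obtain ⟨c, hc0, hcsum, herr⟩ := exists_nat_round (range k) (nonempty_range_iff.2 hk.ne')
    (fun i => M * t i) (fun i _ => mul_nonneg hMR.le (ht0 i))
    (mul_nonneg hMR.le (tailMass_nonneg ht0 k))
    (by rw [← mul_sum, ← mul_add, sum_range_add_tailMass ht1, mul_one])
  have hc : IsWeakComposition M k c := ⟨fun i hi => hc0 i (by simpa using hi), hcsum⟩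
  rw [card_range] at herr
  calc vd p t ≤ vd (ofCounts M c) t := hopt _ (hc.isMType hM)
    _ = ∑ i ∈ range k, |ofCounts M c i - t i| + tailMass t k :=
      vd_eq_sum_range_add_tailMass ht0 ht1.summable fun i hi => by simp [ofCounts, hc.1 i hi]
    _ = (∑ i ∈ range k, |(c i : ℝ) - M * t i|) / M + tailMass t k := by
      rw [sum_div]
      congr 1
      refine sum_congr rfl fun i _ => ?_
      rw [ofCounts, show (c i : ℝ) / M - t i = ((c i : ℝ) - M * t i) / M by field_simp, abs_div,
        abs_of_pos hMR]
    _ ≤ (k / 2 + (M * tailMass t k) ^ 2 / (2 * k)) / M + tailMass t k := by gcongr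
    _ = (k : ℝ) / (2 * M) * (1 + M * tailMass t k / k) ^ 2 := by
      field_simp
      ring

end Optimal

/-- if `t` has support of cardinality `n > M` (expressed as `t` having
more than `M` positive entries, i.e. `0 < t M` in 0-based indexing), then there is a
variational-distance optimal `M`-type approximation `p` whose support is the first `k`
indices, with `T_k ≤ k/M` and `‖p − t‖₁ ≤ (k/(2M))(1 + M T_k/k)² ≤ 2k/M`. -/
theorem stmt7 (t : ℕ → ℝ) (ht : IsTargetDist t) (M : ℕ) (hM : 0 < M)
    (hn : 0 < t M) :
    ∃ p : ℕ → ℝ, ∃ k : ℕ, IsMType M p ∧ (∀ q, IsMType M q → vd p t ≤ vd q t) ∧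
      (∀ i, 0 < p i ↔ i < k) ∧
      tailMass t k ≤ (k : ℝ) / M ∧
      vd p t ≤ ((k : ℝ) / (2 * M)) * (1 + M * tailMass t k / k) ^ 2 ∧
      ((k : ℝ) / (2 * M)) * (1 + M * tailMass t k / k) ^ 2 ≤ 2 * k / M := by
  obtain ⟨ht0, hstep, ht1⟩ := ht
  have hanti : Antitone t := antitone_nat_of_succ_le hstep
  obtain ⟨k, c, hc, hopt⟩ := exists_isComposition_forall_vd_le ht0 hanti ht1.summable hM
  have hT := tailMass_le_of_forall_vd_le ht0 hanti ht1 hM hn hc hopt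
  refine ⟨ofCounts M c, k, hc.1.isMType hM, hopt, hc.ofCounts_pos_iff hM, hT,
    vd_le_of_forall_vd_le ht0 ht1 hM hopt (hc.pos hM), ?_⟩
  have hkR : (0 : ℝ) < k := by exact_mod_cast hc.pos hM
  have hMR : (0 : ℝ) < M := by exact_mod_cast hM
  have hx : M * tailMass t k / k ≤ 1 := by
    rw [div_le_one hkR]
    rw [le_div_iff₀ hMR] at hT
    linarith
  have hx0 : 0 ≤ M * tailMass t k / k := by
    have := tailMass_nonneg ht0 k
    positivity
  calc _ ≤ (k : ℝ) / (2 * M) * 2 ^ 2 := by gcongr; linarith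
    _ = 2 * k / M := by ring
end

section
/- Let t be a target distribution with countably infinite support. Then for each positive integer M there exists an M-type distribution p^(M) minimizing ‖p − t‖₁ over all M-type distributions such that the support sizes k(M) of p^(M) satisfy k(M) → ∞ and k(M)/M → 0 as M → ∞. -/
/-!
With `overlap q t = ∑ min (q i) (t i)` one has `‖q − t‖₁ = 2 − 2 · overlap q t`, so the optimal
`M`-types are the maximisers of the overlap. Since `t` is nonincreasing, packing the atoms of an
`M`-type into the first positions does not decrease the overlap, so a maximiser exists among the
finitely many `M`-types supported on `{0, …, M − 1}`. Rounding `M · t` down and putting the leftover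
mass at `0` gives an `M`-type whose loss `1 − overlap` is at most `δ(M) = ∑ min (t i) (1 / M)`,
which tends to `0`. An optimal `p` with `k` atoms has overlap at most `t 0 + ⋯ + t (k − 1)`, and
these partial sums stay below `1`, so `k → ∞`. Every atom carries mass at least `1 / M`, paid for
either by the loss or by `min (t i) (1 / M)`, so `k / M ≤ 2 δ(M) → 0`.
-/

open Filter Finset Topology

noncomputable def overlap (q t : ℕ → ℝ) : ℝ := ∑' i, min (q i) (t i)

section Pack

variable {α : Type*}

def Finset.pack [Zero α] (S : Finset ℕ) (f : ℕ → α) (j : ℕ) : α :=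
  if h : j < S.card then f (S.orderEmbOfFin rfl ⟨j, h⟩) else 0

theorem Finset.pack_of_card_le [Zero α] (S : Finset ℕ) (f : ℕ → α) {j : ℕ} (hj : S.card ≤ j) :
    S.pack f j = 0 :=
  dif_neg hj.not_gt

theorem Finset.pack_coe [Zero α] (S : Finset ℕ) (f : ℕ → α) (j : Fin S.card) :
    S.pack f j = f (S.orderEmbOfFin rfl j) :=
  dif_pos j.isLt

theorem Finset.le_orderEmbOfFin (S : Finset ℕ) (j : Fin S.card) :
    (j : ℕ) ≤ S.orderEmbOfFin rfl j := by
  have hsub : (Iio j).map (S.orderEmbOfFin rfl).toEmbedding ⊆ range (S.orderEmbOfFin rfl j) := by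
    simp only [subset_iff, mem_map, mem_Iio, mem_range]
    rintro _ ⟨i, hi, rfl⟩
    exact (S.orderEmbOfFin rfl).strictMono hi
  simpa using card_le_card hsub

theorem Finset.sum_orderEmbOfFin [AddCommMonoid α] (S : Finset ℕ) (f : ℕ → α) :
    ∑ j : Fin S.card, f (S.orderEmbOfFin rfl j) = ∑ i ∈ S, f i := by
  conv_rhs => rw [← map_orderEmbOfFin_univ S rfl, sum_map]
  rfl

end Pack

variable {t q : ℕ → ℝ} {M : ℕ}

theorem summable_min_of_nonneg (hq0 : ∀ i, 0 ≤ q i) (ht0 : ∀ i, 0 ≤ t i) (hq : Summable q) :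
    Summable fun i => min (q i) (t i) :=
  .of_nonneg_of_le (fun i => le_min (hq0 i) (ht0 i)) (fun _ => min_le_left _ _) hq

theorem overlap_comm (q t : ℕ → ℝ) : overlap q t = overlap t q :=
  tsum_congr fun _ => min_comm _ _

theorem hasSum_sub_min (hq0 : ∀ i, 0 ≤ q i) (ht0 : ∀ i, 0 ≤ t i) (hq : HasSum q 1) :
    HasSum (fun i => q i - min (q i) (t i)) (1 - overlap q t) :=
  hq.sub (summable_min_of_nonneg hq0 ht0 hq.summable).hasSum

theorem vd_eq_two_sub_two_mul_overlap (hq0 : ∀ i, 0 ≤ q i) (ht0 : ∀ i, 0 ≤ t i)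
    (hq : HasSum q 1) (ht : HasSum t 1) : vd q t = 2 - 2 * overlap q t := by
  have h := (hasSum_sub_min hq0 ht0 hq).add (hasSum_sub_min ht0 hq0 ht)
  rw [overlap_comm t q] at h
  rw [vd, show (2 : ℝ) - 2 * overlap q t = 1 - overlap q t + (1 - overlap q t) by ring,
    ← h.tsum_eq]
  congr 1 with i
  rcases le_total (q i) (t i) with hi | hi
  · rw [abs_of_nonpos (sub_nonpos.2 hi), min_eq_left hi, min_eq_right hi]; ring
  · rw [abs_of_nonneg (sub_nonneg.2 hi), min_eq_right hi, min_eq_left hi]; ring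

theorem overlap_eq_sum {S : Finset ℕ} (ht0 : ∀ i, 0 ≤ t i) (hq : ∀ i ∉ S, q i = 0) :
    overlap q t = ∑ i ∈ S, min (q i) (t i) :=
  tsum_eq_sum fun i hi => by rw [hq i hi, min_eq_left (ht0 i)]

theorem isMType_of_sum_eq (hM : 0 < M) {S : Finset ℕ} {c : ℕ → ℕ} (hc : ∀ i ∉ S, c i = 0)
    (hsum : ∑ i ∈ S, c i = M) : IsMType M fun i => (c i : ℝ) / M := by
  refine ⟨?_, c, fun i => ?_, fun i => rfl⟩
  · have hS : ∑ i ∈ S, (c i : ℝ) / M = 1 := by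
      rw [← sum_div, ← Nat.cast_sum, hsum, div_self (by positivity)]
    exact hS ▸ hasSum_sum_of_ne_finset_zero fun i hi => by simp [hc i hi]
  · by_cases hi : i ∈ S
    · exact hsum ▸ single_le_sum (fun j _ => Nat.zero_le (c j)) hi
    · simp [hc i hi]

namespace IsMType

theorem nonneg (hq : IsMType M q) (i : ℕ) : 0 ≤ q i := by
  obtain ⟨-, c, -, hc⟩ := hq
  rw [hc]
  positivity

theorem inv_le (hq : IsMType M q) {i : ℕ} (hi : 0 < q i) : (M : ℝ)⁻¹ ≤ q i := by
  obtain ⟨-, c, -, hc⟩ := hq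
  rw [hc] at hi ⊢
  have hci : (1 : ℝ) ≤ c i := by
    exact_mod_cast Nat.one_le_iff_ne_zero.2 fun h => by simp [h] at hi
  rw [inv_eq_one_div]
  gcongr

theorem finite_setOf_pos (hM : 0 < M) (hq : IsMType M q) : {i | 0 < q i}.Finite := by
  have hsmall : ∀ᶠ i in cofinite, q i < (M : ℝ)⁻¹ :=
    hq.1.summable.tendsto_cofinite_zero.eventually (gt_mem_nhds (by positivity))
  exact (eventually_cofinite.1 hsmall).subset fun i hi => not_lt.2 (hq.inv_le hi)

theorem eq_zero_of_notMem (hq : IsMType M q) {S : Finset ℕ} (hS : ∀ i, i ∈ S ↔ 0 < q i)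
    {i : ℕ} (hi : i ∉ S) : q i = 0 :=
  le_antisymm (not_lt.1 fun h => hi ((hS i).2 h)) (hq.nonneg i)

theorem sum_eq_one (hq : IsMType M q) {S : Finset ℕ} (hS : ∀ i, i ∈ S ↔ 0 < q i) :
    ∑ i ∈ S, q i = 1 :=
  (hq.1.unique (hasSum_sum_of_ne_finset_zero fun _ => hq.eq_zero_of_notMem hS)).symm

theorem card_le (hM : 0 < M) (hq : IsMType M q) {S : Finset ℕ} (hS : ∀ i, i ∈ S ↔ 0 < q i) :
    S.card ≤ M := by
  have h : (S.card : ℝ) * (M : ℝ)⁻¹ ≤ 1 := by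
    rw [← hq.sum_eq_one hS, ← nsmul_eq_mul, ← sum_const]
    exact sum_le_sum fun i hi => hq.inv_le ((hS i).1 hi)
  rwa [← div_eq_mul_inv, div_le_one (by positivity), Nat.cast_le] at h

theorem exists_finset_support (hM : 0 < M) (hq : IsMType M q) :
    ∃ S : Finset ℕ, (∀ i, i ∈ S ↔ 0 < q i) ∧ Nat.card {i | 0 < q i} = S.card :=
  ⟨(hq.finite_setOf_pos hM).toFinset, fun _ => Set.Finite.mem_toFinset _,
    Set.ncard_eq_toFinset_card _ _⟩

end IsMType

theorem finite_setOf_isMType_eq_zero_of_le (M : ℕ) :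
    {q | IsMType M q ∧ ∀ i, M ≤ i → q i = 0}.Finite := by
  have hV : ((fun c : ℕ => (c : ℝ) / M) '' Set.Iic M).Finite := (Set.finite_Iic M).image _
  refine Set.Finite.of_finite_image (f := fun q (i : Fin M) => q i)
    ((Set.Finite.pi fun _ => hV).subset ?_) ?_
  · rintro _ ⟨q, ⟨⟨-, c, hcM, hc⟩, -⟩, rfl⟩ i -
    exact ⟨c i, hcM i, (hc i).symm⟩
  · intro q hq q' hq' h
    funext i
    rcases lt_or_ge i M with hi | hi
    · exact congrFun h ⟨i, hi⟩
    · rw [hq.2 i hi, hq'.2 i hi]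

theorem IsMType.pack (hq : IsMType M q) {S : Finset ℕ} (hS : ∀ i, i ∈ S ↔ 0 < q i) :
    IsMType M (S.pack q) := by
  obtain ⟨c, hcM, hc⟩ := hq.2
  refine ⟨?_, S.pack c, fun j => ?_, fun j => ?_⟩
  · have hsum : ∑ j ∈ range S.card, S.pack q j = 1 := by
      rw [← Fin.sum_univ_eq_sum_range]
      simp only [Finset.pack_coe]
      rw [Finset.sum_orderEmbOfFin, hq.sum_eq_one hS]
    exact hsum ▸ hasSum_sum_of_ne_finset_zero fun j hj =>
      S.pack_of_card_le q (by simpa using hj)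
  · unfold Finset.pack; split_ifs
    exacts [hcM _, Nat.zero_le _]
  · unfold Finset.pack; split_ifs
    exacts [hc _, by simp]

theorem overlap_le_overlap_pack (ht : Antitone t) (ht0 : ∀ i, 0 ≤ t i) {S : Finset ℕ}
    (hS : ∀ i, i ∉ S → q i = 0) : overlap q t ≤ overlap (S.pack q) t := by
  rw [overlap_eq_sum ht0 hS, overlap_eq_sum (S := range S.card) ht0
    fun j hj => S.pack_of_card_le q (by simpa using hj), ← Fin.sum_univ_eq_sum_range,
    ← Finset.sum_orderEmbOfFin]
  simp only [Finset.pack_coe]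
  exact sum_le_sum fun j _ => min_le_min_left _ (ht (S.le_orderEmbOfFin j))

theorem exists_isMType_forall_overlap_le (hM : 0 < M) (ht : Antitone t) (ht0 : ∀ i, 0 ≤ t i) :
    ∃ p, IsMType M p ∧ ∀ q, IsMType M q → overlap q t ≤ overlap p t := by
  have hpoint : IsMType M fun i => ((Pi.single 0 M : ℕ → ℕ) i : ℝ) / M :=
    isMType_of_sum_eq hM (S := {0}) (fun i hi => by simp_all) (by simp)
  obtain ⟨p, ⟨hp, -⟩, hmax⟩ := Set.exists_max_image _ (overlap · t)
    (finite_setOf_isMType_eq_zero_of_le M)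
    ⟨_, hpoint, fun i hi => by simp [(hM.trans_le hi).ne']⟩
  refine ⟨p, hp, fun q hq => ?_⟩
  obtain ⟨S, hS, -⟩ := hq.exists_finset_support hM
  exact (overlap_le_overlap_pack ht ht0 fun _ => hq.eq_zero_of_notMem hS).trans
    (hmax _ ⟨hq.pack hS, fun i hi => S.pack_of_card_le q ((hq.card_le hM hS).trans hi)⟩)

theorem IsMType.overlap_le_sum_range_card (hM : 0 < M) (ht : Antitone t) (ht0 : ∀ i, 0 ≤ t i)
    (hq : IsMType M q) : overlap q t ≤ ∑ i ∈ range (Nat.card {i | 0 < q i}), t i := by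
  obtain ⟨S, hS, hcard⟩ := hq.exists_finset_support hM
  calc overlap q t ≤ overlap (S.pack q) t :=
        overlap_le_overlap_pack ht ht0 fun _ => hq.eq_zero_of_notMem hS
    _ = ∑ i ∈ range S.card, min (S.pack q i) (t i) :=
        overlap_eq_sum ht0 fun j hj => S.pack_of_card_le q (by simpa using hj)
    _ ≤ ∑ i ∈ range (Nat.card {i | 0 < q i}), t i :=
        hcard ▸ sum_le_sum fun i _ => min_le_right _ _

theorem one_sub_overlap_le_tsum {e : ℕ → ℝ} (hq0 : ∀ i, 0 ≤ q i) (ht0 : ∀ i, 0 ≤ t i)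
    (ht : HasSum t 1) (he : Summable e) (hle : ∀ i, t i - min (q i) (t i) ≤ e i) :
    1 - overlap q t ≤ ∑' i, e i := by
  rw [overlap_comm]
  exact hasSum_le (fun i => min_comm (q i) (t i) ▸ hle i) (hasSum_sub_min ht0 hq0 ht) he.hasSum

theorem exists_isMType_one_sub_overlap_le (hM : 0 < M) (ht0 : ∀ i, 0 ≤ t i) (ht : HasSum t 1) :
    ∃ q, IsMType M q ∧ 1 - overlap q t ≤ ∑' i, min (t i) (M : ℝ)⁻¹ := by
  have hMpos : (0 : ℝ) < M := by exact_mod_cast hM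
  obtain ⟨n, hn⟩ : ∃ n, ∀ i ≥ n, t i < (M : ℝ)⁻¹ :=
    (ht.summable.tendsto_atTop_zero.eventually (gt_mem_nhds (by positivity))
      ).exists_forall_of_atTop
  set f : ℕ → ℕ := fun i => ⌊M * t i⌋₊
  have hf : ∀ i ∉ range (n + 1), f i = 0 := fun i hi => by
    refine Nat.floor_eq_zero.2 ?_
    calc (M : ℝ) * t i < M * (M : ℝ)⁻¹ := by gcongr; exact hn i (by simp at hi; omega)
      _ = 1 := mul_inv_cancel₀ hMpos.ne'
  have hfM : ∑ i ∈ range (n + 1), f i ≤ M := by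
    have : ((∑ i ∈ range (n + 1), f i : ℕ) : ℝ) ≤ M := calc
      _ ≤ ∑ i ∈ range (n + 1), M * t i := by
        push_cast
        exact sum_le_sum fun i _ => Nat.floor_le (mul_nonneg hMpos.le (ht0 i))
      _ = M * ∑ i ∈ range (n + 1), t i := (mul_sum ..).symm
      _ ≤ M := mul_le_of_le_one_right hMpos.le (sum_le_hasSum _ (fun i _ => ht0 i) ht)
    exact_mod_cast this
  set c : ℕ → ℕ := fun i => f i + if i = 0 then M - ∑ i ∈ range (n + 1), f i else 0
  have hc : IsMType M fun i => (c i : ℝ) / M := by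
    refine isMType_of_sum_eq hM (S := range (n + 1)) (fun i hi => ?_) ?_
    · simp [c, hf i hi, show i ≠ 0 by rintro rfl; simp at hi]
    · simp [c, sum_add_distrib, hfM]
  refine ⟨_, hc, one_sub_overlap_le_tsum hc.nonneg ht0 ht
    (summable_min_of_nonneg ht0 (fun _ => by positivity) ht.summable) fun i => ?_⟩
  have hfloor : t i - c i / M < (M : ℝ)⁻¹ := by
    have hfc : (f i : ℝ) + 1 ≤ c i + 1 := by
      exact_mod_cast Nat.add_le_add_right (Nat.le_add_right _ _) 1
    have hlt : (M : ℝ) * t i < c i + 1 := (Nat.lt_floor_add_one _).trans_le hfc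
    calc t i - c i / M = (M * t i - c i) / M := by field_simp
      _ < 1 / M := by gcongr; linarith
      _ = (M : ℝ)⁻¹ := one_div _
  simp only [min_def]
  split_ifs <;> linarith [hc.nonneg i, ht0 i, inv_pos.2 hMpos]

theorem IsMType.card_div_le (hM : 0 < M) (hq : IsMType M q) (ht0 : ∀ i, 0 ≤ t i)
    (ht : Summable t) :
    (Nat.card {i | 0 < q i} : ℝ) / M ≤ 1 - overlap q t + ∑' i, min (t i) (M : ℝ)⁻¹ := by
  obtain ⟨S, hS, hcard⟩ := hq.exists_finset_support hM
  have hsum := (hasSum_sub_min hq.nonneg ht0 hq.1).add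
    (summable_min_of_nonneg (t := fun _ => (M : ℝ)⁻¹) ht0 (fun _ => by positivity) ht).hasSum
  have hatom : ∀ i ∈ S, (M : ℝ)⁻¹ ≤ q i - min (q i) (t i) + min (t i) (M : ℝ)⁻¹ := by
    intro i hi
    have hqi := hq.inv_le ((hS i).1 hi)
    simp only [min_def]
    split_ifs <;> linarith
  calc (Nat.card {i | 0 < q i} : ℝ) / M = ∑ _i ∈ S, (M : ℝ)⁻¹ := by
        rw [sum_const, nsmul_eq_mul, hcard, div_eq_mul_inv]
    _ ≤ ∑ i ∈ S, (q i - min (q i) (t i) + min (t i) (M : ℝ)⁻¹) := sum_le_sum hatom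
    _ ≤ _ := sum_le_hasSum S (fun i _ => add_nonneg (sub_nonneg.2 (min_le_left _ _))
        (le_min (ht0 i) (by positivity))) hsum

theorem tendsto_tsum_min_inv_natCast (ht0 : ∀ i, 0 ≤ t i) (ht : Summable t) :
    Tendsto (fun M : ℕ => ∑' i, min (t i) (M : ℝ)⁻¹) atTop (𝓝 0) := by
  have h := tendsto_tsum_of_dominated_convergence (𝓕 := atTop)
    (f := fun (M : ℕ) i => min (t i) (M : ℝ)⁻¹) (g := fun _ => 0) ht
    (fun i => min_eq_right (ht0 i) ▸
      (tendsto_const_nhds (x := t i)).min (tendsto_inv_atTop_nhds_zero_nat (𝕜 := ℝ)))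
    (.of_forall fun M i => by
      rw [Real.norm_of_nonneg (le_min (ht0 i) (by positivity))]; exact min_le_left _ _)
  simpa using h

theorem tendsto_atTop_of_one_sub_le_sum_range {ι : Type*} {l : Filter ι} {k : ι → ℕ}
    {δ : ι → ℝ} (ht : HasSum t 1) (hpos : ∀ i, 0 < t i) (hδ : Tendsto δ l (𝓝 0))
    (hk : ∀ᶠ x in l, 1 - δ x ≤ ∑ i ∈ range (k x), t i) : Tendsto k l atTop := by
  refine tendsto_atTop.2 fun b => ?_
  have hb : ∑ i ∈ range b, t i < 1 := by
    calc ∑ i ∈ range b, t i < ∑ i ∈ range (b + 1), t i := by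
          rw [sum_range_succ]; linarith [hpos b]
      _ ≤ 1 := sum_le_hasSum _ (fun i _ => (hpos i).le) ht
  filter_upwards [hk, hδ.eventually (gt_mem_nhds (sub_pos.2 hb))] with x hkx hδx
  by_contra! hlt
  have := sum_le_sum_of_subset_of_nonneg (f := t) (range_subset_range.2 hlt.le)
    fun i _ _ => (hpos i).le
  linarith

/-- for a target distribution with countably infinite support there is,
for every `M ≥ 1`, a variational-distance optimal `M`-type approximation `p M` whose
support sizes `k(M)` satisfy `k(M) → ∞` and `k(M)/M → 0` as `M → ∞`. -/
theorem stmt8 (t : ℕ → ℝ) (ht : IsTargetDist t) (hpos : ∀ i, 0 < t i) :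
    ∃ p : ℕ → ℕ → ℝ,
      (∀ M, 0 < M → IsMType M (p M) ∧ ∀ q, IsMType M q → vd (p M) t ≤ vd q t) ∧
      Filter.Tendsto (fun M => Nat.card {i | 0 < p M i}) Filter.atTop Filter.atTop ∧
      Filter.Tendsto (fun M => (Nat.card {i | 0 < p M i} : ℝ) / (M : ℝ))
        Filter.atTop (nhds 0) := by
  obtain ⟨ht0, hsucc, ht1⟩ := ht
  have hanti : Antitone t := antitone_nat_of_succ_le hsucc
  choose! p hp hopt using fun M (hM : 0 < M) => exists_isMType_forall_overlap_le hM hanti ht0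
  set δ : ℕ → ℝ := fun M => ∑' i, min (t i) (M : ℝ)⁻¹
  have hδ : Tendsto δ atTop (𝓝 0) := tendsto_tsum_min_inv_natCast ht0 ht1.summable
  have hloss : ∀ M, 0 < M → 1 - overlap (p M) t ≤ δ M := fun M hM => by
    obtain ⟨q, hq, hqδ⟩ := exists_isMType_one_sub_overlap_le hM ht0 ht1
    linarith [hopt M hM q hq]
  refine ⟨p, fun M hM => ⟨hp M hM, fun q hq => ?_⟩, ?_, ?_⟩
  · rw [vd_eq_two_sub_two_mul_overlap (hp M hM).nonneg ht0 (hp M hM).1 ht1,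
      vd_eq_two_sub_two_mul_overlap hq.nonneg ht0 hq.1 ht1]
    linarith [hopt M hM q hq]
  · refine tendsto_atTop_of_one_sub_le_sum_range ht1 hpos hδ ?_
    filter_upwards [eventually_gt_atTop 0] with M hM
    linarith [hloss M hM, (hp M hM).overlap_le_sum_range_card hM hanti ht0]
  · refine squeeze_zero' (.of_forall fun M => by positivity) ?_ (by simpa using hδ.const_mul 2)
    filter_upwards [eventually_gt_atTop 0] with M hM
    linarith [hloss M hM, (hp M hM).card_div_le hM ht0 ht1.summable]
end
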